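/- Let d ≥ 1, let A be a real m×d matrix with full row rank m, let b ∈ ℝ^m, and suppose the feasible set M = {x ∈ Δ^{d−1} : Ax = b} is nonempty. Let ℓ : ℝ^d → ℝ be convex and differentiable, let τ > 0, and define the entropy-regularized loss ℓ^τ(x) = ℓ(x) − τH(x). If μ ∈ M has all coordinates strictly positive, then ℓ(μ) − min_{z ∈ M} ℓ(z) ≤ τ log d + √2 · ‖Π_A ∇ℓ^τ(μ)‖₂. -/

import Mathlib

/-!
Fix a feasible `z`. Convexity of `ℓ` bounds `ℓ μ - ℓ z` by `∇ℓ(μ) ⬝ (μ - z)`, and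
`∇ℓ(μ) = ∇ℓ^τ(μ) + τ ∇H(μ)`. Since `A (μ - z) = 0` and `Π_A` is a symmetric projection fixing
`ker A`, the first term equals `Π_A ∇ℓ^τ(μ) ⬝ (μ - z)`, which Cauchy–Schwarz bounds by
`√2 ‖Π_A ∇ℓ^τ(μ)‖` because the simplex has Euclidean diameter `√2`. The second term is
`τ (H(μ) + ∑ zₖ log μₖ) ≤ τ H(μ) ≤ τ log d`.
-/

open Matrix

/-- Tangent-space projection matrix `Π_A = I − Aᵀ(AAᵀ)⁻¹A`. -/
noncomputable def projMat {m d : ℕ} (A : Matrix (Fin m) (Fin d) ℝ) :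
    Matrix (Fin d) (Fin d) ℝ :=
  1 - Aᵀ * (A * Aᵀ)⁻¹ * A

/-- The gradient of `f : ℝ^d → ℝ` at `x`. -/
noncomputable def grad {d : ℕ} (f : (Fin d → ℝ) → ℝ) (x : Fin d → ℝ) : Fin d → ℝ :=
  fun k => fderiv ℝ f x (Pi.single k 1)

/-- Shannon entropy `H(x) = −∑ₖ xₖ log xₖ`. -/
noncomputable def shannonEntropy {d : ℕ} (x : Fin d → ℝ) : ℝ :=
  -∑ k, x k * Real.log (x k)

theorem ConvexOn.sub_le_fderiv_sub {E : Type*} [NormedAddCommGroup E] [NormedSpace ℝ E]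
    {s : Set E} {f : E → ℝ} (hf : ConvexOn ℝ s f) {x y : E} (hx : x ∈ s) (hy : y ∈ s)
    (hfx : DifferentiableAt ℝ f x) :
    f x - f y ≤ fderiv ℝ f x (x - y) := by
  let line : ℝ →ᵃ[ℝ] E := AffineMap.lineMap x y
  have hderiv : HasDerivAt (f ∘ line) (fderiv ℝ f x (y - x)) 0 := by
    have hline : HasDerivAt line (y - x) 0 := by
      have : (line : ℝ → E) = fun t => t • (y - x) + x :=
        funext fun t => AffineMap.lineMap_apply_module' x y t
      rw [this]
      simpa using ((hasDerivAt_id (0 : ℝ)).smul_const (y - x)).add_const x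
    have hfx' : HasFDerivAt f (fderiv ℝ f x) (line 0) := by
      simpa [line] using hfx.hasFDerivAt
    exact hfx'.comp_hasDerivAt 0 hline
  have hslope := (hf.comp_affineMap line).le_slope_of_hasDerivAt
    (by simpa [line] using hx) (by simpa [line] using hy) zero_lt_one hderiv
  rw [slope_def_field] at hslope
  simp only [Function.comp_apply, line, AffineMap.lineMap_apply_zero,
    AffineMap.lineMap_apply_one, sub_zero, div_one] at hslope
  rw [← neg_sub y x, map_neg]
  linarith

theorem fderiv_apply_eq_grad_dotProduct {d : ℕ} (f : (Fin d → ℝ) → ℝ) (x v : Fin d → ℝ) :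
    fderiv ℝ f x v = grad f x ⬝ᵥ v := by
  rw [← ContinuousLinearMap.coe_coe, LinearMap.pi_apply_eq_sum_univ, dotProduct]
  refine Finset.sum_congr rfl fun k _ => ?_
  have hbasis : (fun j => if k = j then (1 : ℝ) else 0) = Pi.single k 1 := by
    ext j
    simp [Pi.single_apply, eq_comm]
  rw [hbasis, smul_eq_mul, mul_comm]
  rfl

theorem grad_sub_const_mul {d : ℕ} {f g : (Fin d → ℝ) → ℝ} {x : Fin d → ℝ}
    (hf : DifferentiableAt ℝ f x) (hg : DifferentiableAt ℝ g x) (c : ℝ) :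
    grad (fun y => f y - c * g y) x = grad f x - c • grad g x := by
  ext k
  simp [grad, fderiv_fun_sub hf (hg.const_mul c), fderiv_const_mul hg]

theorem shannonEntropy_eq_sum_negMulLog {d : ℕ} (x : Fin d → ℝ) :
    shannonEntropy x = ∑ k, Real.negMulLog (x k) := by
  simp [shannonEntropy, Real.negMulLog, Finset.sum_neg_distrib]

theorem hasFDerivAt_shannonEntropy {d : ℕ} {x : Fin d → ℝ} (hx : ∀ k, x k ≠ 0) :
    HasFDerivAt shannonEntropy
      (∑ k, (-Real.log (x k) - 1) •
        ContinuousLinearMap.proj (R := ℝ) (φ := fun _ : Fin d => ℝ) k) x := by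
  rw [funext shannonEntropy_eq_sum_negMulLog]
  refine HasFDerivAt.fun_sum fun k _ => ?_
  exact (Real.hasDerivAt_negMulLog (hx k)).comp_hasFDerivAt x (hasFDerivAt_apply (𝕜 := ℝ) k x)

theorem grad_shannonEntropy {d : ℕ} {x : Fin d → ℝ} (hx : ∀ k, x k ≠ 0) :
    grad shannonEntropy x = fun k => -Real.log (x k) - 1 := by
  ext k
  simp [grad, (hasFDerivAt_shannonEntropy hx).fderiv, Pi.single_apply]

theorem shannonEntropy_le_log {d : ℕ} {x : Fin d → ℝ} (hx : x ∈ stdSimplex ℝ (Fin d)) :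
    shannonEntropy x ≤ Real.log d := by
  have hd : (0 : ℝ) < d := by
    rcases Nat.eq_zero_or_pos d with rfl | hd
    · simpa using hx.2
    · exact_mod_cast hd
  -- `negMulLog t ≤ 1 - t` at the rescaled points `t = d * x k`, summed over `k`.
  have hsum : ∑ k, Real.negMulLog (d * x k) ≤ ∑ k, (1 - d * x k) :=
    Finset.sum_le_sum fun k _ => Real.negMulLog_le_one_sub_self (mul_nonneg hd.le (hx.1 k))
  have hlhs : ∑ k, Real.negMulLog (d * x k) = Real.negMulLog d + d * shannonEntropy x := by
    simp_rw [Real.negMulLog_mul, Finset.sum_add_distrib, ← Finset.sum_mul, ← Finset.mul_sum,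
      hx.2, shannonEntropy_eq_sum_negMulLog, one_mul]
  have hrhs : ∑ k, (1 - d * x k) = 0 := by
    simp [Finset.sum_sub_distrib, ← Finset.mul_sum, hx.2]
  rw [hlhs, hrhs, Real.negMulLog] at hsum
  refine le_of_mul_le_mul_left ?_ hd
  linarith

theorem grad_shannonEntropy_dotProduct_sub_le_log {d : ℕ} {x y : Fin d → ℝ}
    (hx : x ∈ stdSimplex ℝ (Fin d)) (hx0 : ∀ k, 0 < x k) (hy : y ∈ stdSimplex ℝ (Fin d)) :
    grad shannonEntropy x ⬝ᵥ (x - y) ≤ Real.log d := by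
  have hlog (k : Fin d) : Real.log (x k) ≤ 0 :=
    Real.log_nonpos (hx.1 k) (mem_Icc_of_mem_stdSimplex hx k).2
  have hexpand : ∑ k, (-Real.log (x k) - 1) * (x k - y k)
      = shannonEntropy x + ∑ k, y k * Real.log (x k) + (∑ k, y k - ∑ k, x k) := by
    rw [shannonEntropy, ← Finset.sum_neg_distrib, ← Finset.sum_add_distrib,
      ← Finset.sum_sub_distrib, ← Finset.sum_add_distrib]
    exact Finset.sum_congr rfl fun k _ => by ring
  calc grad shannonEntropy x ⬝ᵥ (x - y)
      = shannonEntropy x + ∑ k, y k * Real.log (x k) := by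
        rw [grad_shannonEntropy fun k => (hx0 k).ne', dotProduct]
        simp only [Pi.sub_apply]
        rw [hexpand, hx.2, hy.2, sub_self, add_zero]
    _ ≤ shannonEntropy x := add_le_of_nonpos_right
        (Finset.sum_nonpos fun k _ => mul_nonpos_of_nonneg_of_nonpos (hy.1 k) (hlog k))
    _ ≤ Real.log d := shannonEntropy_le_log hx

theorem sum_sub_sq_le_two_of_mem_stdSimplex {ι : Type*} [Fintype ι] {x y : ι → ℝ}
    (hx : x ∈ stdSimplex ℝ ι) (hy : y ∈ stdSimplex ℝ ι) :
    ∑ i, (x i - y i) ^ 2 ≤ 2 := by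
  have hle (i : ι) : (x i - y i) ^ 2 ≤ x i + y i := by
    obtain ⟨hx0, hx1⟩ := mem_Icc_of_mem_stdSimplex hx i
    obtain ⟨hy0, hy1⟩ := mem_Icc_of_mem_stdSimplex hy i
    nlinarith
  calc ∑ i, (x i - y i) ^ 2 ≤ ∑ i, (x i + y i) := Finset.sum_le_sum fun i _ => hle i
    _ = 2 := by rw [Finset.sum_add_distrib, hx.2, hy.2]; norm_num

theorem projMat_transpose {m d : ℕ} (A : Matrix (Fin m) (Fin d) ℝ) :
    (projMat A)ᵀ = projMat A := by
  rw [projMat, transpose_sub, transpose_one, transpose_mul, transpose_mul,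
    transpose_transpose, transpose_nonsing_inv, transpose_mul, transpose_transpose,
    Matrix.mul_assoc]

theorem projMat_mulVec_of_mulVec_eq_zero {m d : ℕ} {A : Matrix (Fin m) (Fin d) ℝ}
    {v : Fin d → ℝ} (hv : A *ᵥ v = 0) : projMat A *ᵥ v = v := by
  rw [projMat, sub_mulVec, one_mulVec, ← mulVec_mulVec, hv, mulVec_zero, sub_zero]

theorem projMat_mulVec_dotProduct_of_mulVec_eq_zero {m d : ℕ} {A : Matrix (Fin m) (Fin d) ℝ}
    (g : Fin d → ℝ) {v : Fin d → ℝ} (hv : A *ᵥ v = 0) :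
    (projMat A *ᵥ g) ⬝ᵥ v = g ⬝ᵥ v := by
  rw [← vecMul_transpose, projMat_transpose, ← dotProduct_mulVec,
    projMat_mulVec_of_mulVec_eq_zero hv]

theorem dotProduct_sub_le_sqrt_two_mul_of_mem_stdSimplex {ι : Type*} [Fintype ι] (v : ι → ℝ)
    {x y : ι → ℝ} (hx : x ∈ stdSimplex ℝ ι) (hy : y ∈ stdSimplex ℝ ι) :
    v ⬝ᵥ (x - y) ≤ Real.sqrt 2 * Real.sqrt (∑ i, v i ^ 2) := by
  calc v ⬝ᵥ (x - y) = ∑ i, v i * (x i - y i) := rfl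
    _ ≤ Real.sqrt (∑ i, v i ^ 2) * Real.sqrt (∑ i, (x i - y i) ^ 2) :=
        Real.sum_mul_le_sqrt_mul_sqrt _ _ _
    _ ≤ Real.sqrt (∑ i, v i ^ 2) * Real.sqrt 2 := by
        gcongr
        exact sum_sub_sq_le_two_of_mem_stdSimplex hx hy
    _ = Real.sqrt 2 * Real.sqrt (∑ i, v i ^ 2) := mul_comm _ _

theorem entropy_regularized_loss_bounds_exploitability_general
    {m d : ℕ} (A : Matrix (Fin m) (Fin d) ℝ)
    (b : Fin m → ℝ)
    (ℓ : (Fin d → ℝ) → ℝ)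
    (hconv : ConvexOn ℝ Set.univ ℓ) (hdiff : Differentiable ℝ ℓ)
    (τ : ℝ) (hτ : 0 < τ)
    (μ : Fin d → ℝ)
    (hμ : μ ∈ stdSimplex ℝ (Fin d)) (hμb : A *ᵥ μ = b)
    (hμpos : ∀ k, 0 < μ k) :
    ℓ μ - sInf (ℓ '' {x : Fin d → ℝ | x ∈ stdSimplex ℝ (Fin d) ∧ A *ᵥ x = b}) ≤
      τ * Real.log d +
        Real.sqrt 2 *
          Real.sqrt
            (∑ k, (projMat A *ᵥ grad (fun x => ℓ x - τ * shannonEntropy x) μ) k ^ 2) := by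
  set g := grad (fun x => ℓ x - τ * shannonEntropy x) μ with hg
  rw [sub_le_comm]
  refine le_csInf ⟨ℓ μ, μ, ⟨hμ, hμb⟩, rfl⟩ ?_
  rintro _ ⟨z, ⟨hz, hzb⟩, rfl⟩
  have hker : A *ᵥ (μ - z) = 0 := by rw [mulVec_sub, hμb, hzb, sub_self]
  have hgrad : grad ℓ μ = g + τ • grad shannonEntropy μ := by
    rw [hg, grad_sub_const_mul (hdiff μ)
      (hasFDerivAt_shannonEntropy fun k => (hμpos k).ne').differentiableAt τ]
    abel
  have hsplit : ℓ μ - ℓ z ≤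
      (projMat A *ᵥ g) ⬝ᵥ (μ - z) + τ * (grad shannonEntropy μ ⬝ᵥ (μ - z)) := by
    calc ℓ μ - ℓ z ≤ grad ℓ μ ⬝ᵥ (μ - z) := by
          rw [← fderiv_apply_eq_grad_dotProduct]
          exact hconv.sub_le_fderiv_sub (Set.mem_univ μ) (Set.mem_univ z) (hdiff μ)
      _ = (projMat A *ᵥ g) ⬝ᵥ (μ - z) + τ * (grad shannonEntropy μ ⬝ᵥ (μ - z)) := by
          rw [hgrad, add_dotProduct, smul_dotProduct, smul_eq_mul,
            projMat_mulVec_dotProduct_of_mulVec_eq_zero g hker]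
  have hprojected := dotProduct_sub_le_sqrt_two_mul_of_mem_stdSimplex (projMat A *ᵥ g) hμ hz
  have hentropy := mul_le_mul_of_nonneg_left
    (grad_shannonEntropy_dotProduct_sub_le_log hμ hμpos hz) hτ.le
  linarith

/-- Entropy-regularized loss bound: if `μ ∈ M = {x ∈ Δ^{d−1} : Ax = b}` has strictly
positive coordinates, `ℓ` is convex and differentiable, and `τ > 0`, then
`ℓ(μ) − min_{z ∈ M} ℓ(z) ≤ τ log d + √2 ⬝ ‖Π_A ∇ℓ^τ(μ)‖₂` with
`ℓ^τ(x) = ℓ(x) − τ H(x)`. -/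
theorem entropy_regularized_loss_bounds_exploitability
    {m d : ℕ} (hd : 1 ≤ d) (A : Matrix (Fin m) (Fin d) ℝ) (hA : A.rank = m)
    (b : Fin m → ℝ)
    (hM : {x : Fin d → ℝ | x ∈ stdSimplex ℝ (Fin d) ∧ A *ᵥ x = b}.Nonempty)
    (ℓ : (Fin d → ℝ) → ℝ)
    (hconv : ConvexOn ℝ Set.univ ℓ) (hdiff : Differentiable ℝ ℓ)
    (τ : ℝ) (hτ : 0 < τ)
    (μ : Fin d → ℝ)
    (hμ : μ ∈ stdSimplex ℝ (Fin d)) (hμb : A *ᵥ μ = b)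
    (hμpos : ∀ k, 0 < μ k) :
    ℓ μ - sInf (ℓ '' {x : Fin d → ℝ | x ∈ stdSimplex ℝ (Fin d) ∧ A *ᵥ x = b}) ≤
      τ * Real.log d +
        Real.sqrt 2 *
          Real.sqrt
            (∑ k, (projMat A *ᵥ grad (fun x => ℓ x - τ * shannonEntropy x) μ) k ^ 2) :=
  entropy_regularized_loss_bounds_exploitability_general A b ℓ hconv hdiff τ hτ μ hμ hμb hμpos
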